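/- arXiv:1002.1686 — 5 statements merged into one kernel-verified Lean document; each statement's English description precedes it below -/
import Mathlib

section
/- With g^{a,r} the standard inclusion (r ≥ 0) or collapse (r ≤ 0) maps between the modules L^a and L^{a+r}, one has: whenever a + r ≥ 0, g^{a,r} ∘ g^{a+r,−r} = (1 − t)^{|r|} as an endomorphism of L^{a+r}. -/
/-!
`1 - t` is the nilpotent shift `((1 - t) x)ᵢ = xᵢ₊₁` (zero past the last coordinate), so
`(1 - t)^r` shifts coordinates by `r`. Collapsing the first `r` coordinates and then
re-including is exactly this shift on `L^{a+r}`, and so is including `L^b` into `L^{b+s}`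
and then collapsing the first `s` coordinates.
-/

open Matrix

/-- The unipotent Jordan block matrix: `1`'s on the diagonal, `-1`'s on the superdiagonal. -/
def JordanBlock (k : Type*) [Field k] (a : ℕ) : Matrix (Fin a) (Fin a) k :=
  fun i j => if i = j then 1 else if (i : ℕ) + 1 = (j : ℕ) then -1 else 0

/-- The monodromy action of `t` on `L^a = k^a`, by the unipotent Jordan block. -/
noncomputable def tAct (k : Type*) [Field k] (a : ℕ) :
    (Fin a → k) →ₗ[k] (Fin a → k) :=
  Matrix.mulVecLin (JordanBlock k a)

/-- The map `g^{m, n-m}` (for `m ≤ n`): inclusion of `L^m` onto the first `m`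
coordinates of `L^n`. -/
def inclL (k : Type*) [Field k] (m n : ℕ) : (Fin m → k) →ₗ[k] (Fin n → k) where
  toFun x i := if h : (i : ℕ) < m then x ⟨i, h⟩ else 0
  map_add' x y := by funext i; by_cases h : (i : ℕ) < m <;> simp [h]
  map_smul' c x := by funext i; by_cases h : (i : ℕ) < m <;> simp [h]

/-- The map `g^{m, -(m-n)}` (for `n ≤ m`): collapse of the first `m - n`
coordinates of `L^m`, onto `L^n`. -/
def collL (k : Type*) [Field k] (m n : ℕ) (h : n ≤ m) : (Fin m → k) →ₗ[k] (Fin n → k) :=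
  LinearMap.funLeft k k (fun i : Fin n => (⟨m - n + (i : ℕ), by have := i.isLt; omega⟩ : Fin m))

section

variable (k : Type*) [Field k] {n : ℕ}

lemma one_sub_jordanBlock_apply (i j : Fin n) :
    (1 - JordanBlock k n) i j = if (i : ℕ) + 1 = j then 1 else 0 := by
  by_cases hij : i = j
  · subst hij; simp [JordanBlock]
  · simp only [Matrix.sub_apply, Matrix.one_apply_ne hij, JordanBlock, if_neg hij]
    split_ifs <;> simp

lemma one_sub_tAct_apply (x : Fin n → k) (i : Fin n) :
    (1 - tAct k n) x i = if h : (i : ℕ) + 1 < n then x ⟨i + 1, h⟩ else 0 := by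
  have hmat : (1 - tAct k n) x = (1 - JordanBlock k n) *ᵥ x := by
    simp [tAct, Matrix.sub_mulVec]
  rw [hmat, Matrix.mulVec, dotProduct]
  simp_rw [one_sub_jordanBlock_apply, ite_mul, one_mul, zero_mul]
  split_ifs with h
  · refine (Finset.sum_eq_single ⟨i + 1, h⟩ (fun j _ hj => if_neg fun e => hj (Fin.ext e.symm))
      (by simp)).trans (if_pos rfl)
  · exact Finset.sum_eq_zero fun j _ => if_neg fun e : (i : ℕ) + 1 = j => h (e ▸ j.isLt)

lemma one_sub_tAct_pow_apply (r : ℕ) (x : Fin n → k) (i : Fin n) :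
    ((1 - tAct k n) ^ r) x i = if h : (i : ℕ) + r < n then x ⟨i + r, h⟩ else 0 := by
  induction r generalizing x with
  | zero => simp
  | succ r ih =>
    simp only [pow_succ, Module.End.mul_apply, ih, one_sub_tAct_apply]
    split_ifs <;> first | rfl | omega

lemma inclL_apply (m n : ℕ) (x : Fin m → k) (i : Fin n) :
    inclL k m n x i = if h : (i : ℕ) < m then x ⟨i, h⟩ else 0 :=
  rfl

lemma collL_apply (m n : ℕ) (h : n ≤ m) (x : Fin m → k) (i : Fin n) :
    collL k m n h x i = x ⟨m - n + i, by omega⟩ :=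
  rfl

lemma inclL_comp_collL (a r : ℕ) (h : a ≤ a + r) :
    inclL k a (a + r) ∘ₗ collL k (a + r) a h = (1 - tAct k (a + r)) ^ r := by
  refine LinearMap.ext fun x => funext fun i => ?_
  simp only [LinearMap.comp_apply, inclL_apply, collL_apply, one_sub_tAct_pow_apply,
    Nat.add_sub_cancel_left, Nat.add_comm r]
  split_ifs <;> first | rfl | omega

lemma collL_comp_inclL (b s : ℕ) (h : b ≤ b + s) :
    collL k (b + s) b h ∘ₗ inclL k b (b + s) = (1 - tAct k b) ^ s := by
  refine LinearMap.ext fun x => funext fun i => ?_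
  simp only [LinearMap.comp_apply, collL_apply, inclL_apply, one_sub_tAct_pow_apply,
    Nat.add_sub_cancel_left, Nat.add_comm s]

end

/-- The identity `g^{a,r} ∘ g^{a+r,-r} = (1 - t)^{|r|}`, as an endomorphism of `L^{a+r}`,
stated for both signs of `r` (for `r ≤ 0` write `r = -s` and `b = a + r`, so that the
identity reads `g^{b+s,-s} ∘ g^{b,s} = (1 - t)^s` on `L^b`). -/
theorem stmt6 (k : Type*) [Field k] :
    (∀ a r : ℕ,
      (inclL k a (a + r)) ∘ₗ (collL k (a + r) a (Nat.le_add_right a r)) =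
        (1 - tAct k (a + r)) ^ r) ∧
    (∀ b s : ℕ,
      (collL k (b + s) b (Nat.le_add_right b s)) ∘ₗ (inclL k b (b + s)) =
        (1 - tAct k b) ^ s) :=
  ⟨fun a r => inclL_comp_collL k a r _, fun b s => collL_comp_inclL k b s _⟩
end

section
/- Let t be a unit in a commutative ring R with (1 − t)^N = 0 for some N, and let M be an R-module. An element (x_1, …, x_a) ∈ M^a lies in the kernel of 1 − T, where T(x_1, …, x_a) = (t x_1 − t x_2, …, t x_a), if and only if x_{i+1} = (1 − t⁻¹) x_i for all i < a and (1 − t⁻¹)^a x_1 = 0. -/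
/-!
Write `s = 1 - t⁻¹`. Since `t` is a unit, the coordinate equation `t x_i - t x_{i+1} = x_i` says
exactly `x_{i+1} = s x_i`, and the last one, `t x_a = x_a`, says `s x_a = 0`. The recursion gives
`x_a = s^{a-1} x_1`, so the last condition becomes `s^a x_1 = 0`.
-/

variable (R : Type*) [CommRing R] (M : Type*) [AddCommGroup M] [Module R M]

/-- The monodromy action `T` of `t` on `M^a ≅ M ⊗ L^a`:
`T(x_1, …, x_a) = (t x_1 - t x_2, …, t x_{a-1} - t x_a, t x_a)`. -/
def Tmon (t : Rˣ) (a : ℕ) : (Fin a → M) →ₗ[R] (Fin a → M) where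
  toFun x i := (t : R) • x i - (if h : (i : ℕ) + 1 < a then (t : R) • x ⟨i + 1, h⟩ else 0)
  map_add' x y := by
    funext i
    by_cases h : (i : ℕ) + 1 < a <;> simp [h, smul_add] <;> abel
  map_smul' c x := by
    funext i
    by_cases h : (i : ℕ) + 1 < a <;> simp [h, smul_sub, smul_comm c]

def umon (t : Rˣ) (a : ℕ) : M →ₗ[R] (Fin a → M) where
  toFun x i := ((1 - (↑t⁻¹ : R)) ^ (i : ℕ)) • x
  map_add' x y := by funext i; simp [smul_add]
  map_smul' c x := by funext i; simp [smul_comm c]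

namespace Units

variable {S N : Type*} [Ring S] [AddCommGroup N] [Module S N]

theorem one_sub_inv_smul (u : Sˣ) (y : N) :
    (1 - (↑u⁻¹ : S)) • y = u⁻¹ • ((u : S) • y - y) := by
  rw [smul_sub, ← Units.smul_def u y, inv_smul_smul, sub_smul, one_smul, Units.smul_def]

theorem smul_sub_smul_eq_iff (u : Sˣ) (y z : N) :
    (u : S) • y - (u : S) • z = y ↔ z = (1 - (↑u⁻¹ : S)) • y := by
  rw [one_sub_inv_smul, eq_inv_smul_iff, Units.smul_def, sub_eq_iff_eq_add', eq_sub_iff_add_eq',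
    eq_comm, add_comm]

theorem smul_eq_self_iff (u : Sˣ) (y : N) :
    (u : S) • y = y ↔ (1 - (↑u⁻¹ : S)) • y = 0 := by
  rw [one_sub_inv_smul, smul_eq_zero_iff_eq, sub_eq_zero]

end Units

theorem Fin.eq_pow_smul_of_succ_eq_smul {S N : Type*} [Monoid S] [MulAction S N] {a : ℕ}
    {x : Fin a → N} {c : S} (hrec : ∀ (i : Fin a) (h : (i : ℕ) + 1 < a), x ⟨i + 1, h⟩ = c • x i)
    (i : Fin a) : x i = c ^ (i : ℕ) • x ⟨0, i.pos⟩ := by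
  obtain ⟨n, hn⟩ := i
  induction n with
  | zero => simp
  | succ n ih => rw [hrec ⟨n, by omega⟩ hn, ih, smul_smul, pow_succ']

variable {R M}

theorem Tmon_apply (t : Rˣ) (a : ℕ) (x : Fin a → M) (i : Fin a) :
    Tmon R M t a x i =
      (t : R) • x i - (if h : (i : ℕ) + 1 < a then (t : R) • x ⟨i + 1, h⟩ else 0) :=
  rfl

theorem Tmon_eq_self_iff (t : Rˣ) (a : ℕ) (ha : 0 < a) (x : Fin a → M) :
    Tmon R M t a x = x ↔
      (∀ (i : Fin a) (h : (i : ℕ) + 1 < a), x ⟨i + 1, h⟩ = (1 - (↑t⁻¹ : R)) • x i) ∧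
        (t : R) • x ⟨a - 1, by omega⟩ = x ⟨a - 1, by omega⟩ := by
  simp only [funext_iff, Tmon_apply]
  constructor
  · intro h
    refine ⟨fun i hi => ?_, ?_⟩
    · simpa only [dif_pos hi, Units.smul_sub_smul_eq_iff] using h i
    · simpa only [show ¬(a - 1 + 1 < a) by omega, dif_neg, not_false_eq_true, sub_zero]
        using h ⟨a - 1, by omega⟩
  · rintro ⟨hrec, hlast⟩ i
    by_cases hi : (i : ℕ) + 1 < a
    · rw [dif_pos hi, Units.smul_sub_smul_eq_iff]
      exact hrec i hi
    · have hi_last : i = ⟨a - 1, by omega⟩ := Fin.ext (show (i : ℕ) = a - 1 by omega)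
      rw [dif_neg hi, sub_zero, hi_last, hlast]

theorem stmt10_general (t : Rˣ)
    (a : ℕ) (ha : 0 < a) (x : Fin a → M) :
    Tmon R M t a x = x ↔
      ((∀ (i : Fin a) (h : (i : ℕ) + 1 < a),
          x ⟨(i : ℕ) + 1, h⟩ = (1 - (↑t⁻¹ : R)) • x i) ∧
        ((1 - (↑t⁻¹ : R)) ^ a) • x ⟨0, ha⟩ = 0) := by
  rw [Tmon_eq_self_iff t a ha, Units.smul_eq_self_iff]
  refine and_congr_right fun hrec => ?_
  rw [Fin.eq_pow_smul_of_succ_eq_smul hrec, smul_smul, ← pow_succ', Nat.sub_add_cancel ha]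

/-- An element `(x_1, …, x_a)` of `M^a` lies in `ker(1 - T)` if and only if
`x_{i+1} = (1 - t⁻¹) x_i` for all `i < a` and `(1 - t⁻¹)^a x_1 = 0`. -/
theorem stmt10 (t : Rˣ) (hnil : ∃ N : ℕ, (1 - (t : R)) ^ N = 0)
    (a : ℕ) (ha : 0 < a) (x : Fin a → M) :
    Tmon R M t a x = x ↔
      ((∀ (i : Fin a) (h : (i : ℕ) + 1 < a),
          x ⟨(i : ℕ) + 1, h⟩ = (1 - (↑t⁻¹ : R)) • x i) ∧
        ((1 - (↑t⁻¹ : R)) ^ a) • x ⟨0, ha⟩ = 0) :=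
  stmt10_general t a ha x
end

section
/- Given a triad 0 → F₋ → A ⊕ B¹ ⊕ B² → F₊ → 0 (as above), set T⁻¹(S) = (ker(d₋²) → A ⊕ B¹ → coker(c₋, d₋¹)), where the first map is the restriction of (c₋, d₋¹). Then T⁻¹(S) is a diad: the composition of the two maps is zero, the component ker(d₋²) → A is injective, and the component A → coker(c₋, d₋¹) is surjective. -/
/-!
The triad's exactness, with `(c₊, d₊²)` epi, makes `d₋¹` epi: to hit `b ∈ B¹`, write
`-d₊¹ b = c₊ a + d₊² b₂`, so `(a, b, b₂)` comes from `F₋`. Then `A → coker (c₋, d₋¹)` is epi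
because `B¹ = d₋¹ F₋` maps into the image of `A`, and `ker d₋² → A` is mono because
`(c₋, d₋²)` is.
-/

open CategoryTheory CategoryTheory.Limits

namespace CategoryTheory

variable {C : Type*} [Category C] [Abelian C]

lemma mono_kernel_ι_comp_of_mono_lift {X A B : C} (f : X ⟶ A) (g : X ⟶ B)
    [Mono (biprod.lift f g)] : Mono (kernel.ι g ≫ f) := by
  have h : kernel.ι g ≫ biprod.lift f g = (kernel.ι g ≫ f) ≫ biprod.inl := by
    ext <;> simp
  have : Mono ((kernel.ι g ≫ f) ≫ (biprod.inl : A ⟶ A ⊞ B)) := h ▸ mono_comp _ _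
  exact mono_of_mono _ (biprod.inl : A ⟶ A ⊞ B)

lemma epi_inl_comp_cokernel_π_lift_of_epi {X A B : C} (f : X ⟶ A) (g : X ⟶ B) [Epi g] :
    Epi (biprod.inl ≫ cokernel.π (biprod.lift f g)) := by
  rw [Preadditive.epi_iff_cancel_zero]
  intro W h hinl
  rw [Category.assoc] at hinl
  -- `g ≫ inr = lift f g - f ≫ inl` is killed by the cokernel, so `inr` is too since `g` is epi.
  have hinr : biprod.inr ≫ cokernel.π (biprod.lift f g) ≫ h = 0 := by
    have hlift : biprod.lift f g = f ≫ biprod.inl + g ≫ biprod.inr := by ext <;> simp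
    have h0 : (f ≫ biprod.inl + g ≫ biprod.inr) ≫ cokernel.π (biprod.lift f g) ≫ h = 0 := by
      rw [← hlift, cokernel.condition_assoc, zero_comp]
    rw [Preadditive.add_comp, Category.assoc, Category.assoc, hinl, comp_zero, zero_add] at h0
    exact (cancel_epi g).mp (by simpa using h0)
  have hπ : cokernel.π (biprod.lift f g) ≫ h = 0 := biprod.hom_ext' _ _ (by simpa) (by simpa)
  exact (cancel_epi (cokernel.π (biprod.lift f g))).mp (by rw [hπ, comp_zero])

lemma ShortComplex.Exact.epi_f_comp {S : ShortComplex C} (hS : S.Exact) {P K : C}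
    (p : S.X₂ ⟶ P) (i : P ⟶ S.X₂) (hip : i ≫ p = 𝟙 P) (j : K ⟶ S.X₂) (hjp : j ≫ p = 0)
    [Epi (j ≫ S.g)] : Epi (S.f ≫ p) := by
  rw [epi_iff_surjective_up_to_refinements]
  intro T b
  -- Correct `b ≫ i` by an element of the image of `j` (invisible to `p`) so that it lies in
  -- `ker S.g = im S.f`.
  obtain ⟨T₁, π₁, hπ₁, u, hu⟩ := surjective_up_to_refinements_of_epi (j ≫ S.g) (b ≫ i ≫ S.g)
  have hz : (π₁ ≫ b ≫ i - u ≫ j) ≫ S.g = 0 := by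
    simp only [Preadditive.sub_comp, Category.assoc, ← hu, sub_self]
  obtain ⟨T₂, π₂, hπ₂, x, hx⟩ := hS.exact_up_to_refinements _ hz
  refine ⟨T₂, π₂ ≫ π₁, epi_comp _ _, x, ?_⟩
  have := hx =≫ p
  simp only [Preadditive.sub_comp, Category.assoc, hip, hjp, comp_zero, sub_zero,
    Category.comp_id] at this
  simpa using this

end CategoryTheory

theorem stmt16_general {C : Type*} [Category C] [Abelian C] {Fm A B1 B2 Fp : C}
    (cm : Fm ⟶ A) (dm1 : Fm ⟶ B1) (dm2 : Fm ⟶ B2)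
    (cp : A ⟶ Fp) (dp1 : B1 ⟶ Fp) (dp2 : B2 ⟶ Fp)
    (w : biprod.lift cm (biprod.lift dm1 dm2) ≫ biprod.desc cp (biprod.desc dp1 dp2) = 0)
    (hS : (ShortComplex.mk _ _ w).ShortExact)
    (hm2 : Mono (biprod.lift cm dm2))
    (he2 : Epi (biprod.desc cp dp2)) :
    (kernel.ι dm2 ≫ biprod.lift cm dm1) ≫ cokernel.π (biprod.lift cm dm1) = 0 ∧
    Mono (kernel.ι dm2 ≫ cm) ∧
    Epi (biprod.inl ≫ cokernel.π (biprod.lift cm dm1)) := by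
  have : Epi (biprod.map (𝟙 A) biprod.inr ≫ biprod.desc cp (biprod.desc dp1 dp2)) := by
    rwa [show biprod.map (𝟙 A) biprod.inr ≫ biprod.desc cp (biprod.desc dp1 dp2) =
      biprod.desc cp dp2 by ext <;> simp]
  have : Epi dm1 := by
    simpa using hS.exact.epi_f_comp (biprod.snd ≫ biprod.fst) (biprod.inl ≫ biprod.inr)
      (by simp) (biprod.map (𝟙 A) biprod.inr) (by simp)
  exact ⟨by simp, mono_kernel_ι_comp_of_mono_lift cm dm2,
    epi_inl_comp_cokernel_π_lift_of_epi cm dm1⟩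

/-- Given a triad `0 → F₋ → A ⊕ B¹ ⊕ B² → F₊ → 0`, the associated complex
`T⁻¹(S) = (ker(d₋²) → A ⊕ B¹ → coker(c₋, d₋¹))` is a diad: the two maps compose to zero,
the component `ker(d₋²) → A` is injective, and the component `A → coker(c₋, d₋¹)` is
surjective. -/
theorem stmt16 {C : Type*} [Category C] [Abelian C] {Fm A B1 B2 Fp : C}
    (cm : Fm ⟶ A) (dm1 : Fm ⟶ B1) (dm2 : Fm ⟶ B2)
    (cp : A ⟶ Fp) (dp1 : B1 ⟶ Fp) (dp2 : B2 ⟶ Fp)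
    (w : biprod.lift cm (biprod.lift dm1 dm2) ≫ biprod.desc cp (biprod.desc dp1 dp2) = 0)
    (hS : (ShortComplex.mk _ _ w).ShortExact)
    (hm1 : Mono (biprod.lift cm dm1)) (hm2 : Mono (biprod.lift cm dm2))
    (he1 : Epi (biprod.desc cp dp1)) (he2 : Epi (biprod.desc cp dp2)) :
    (kernel.ι dm2 ≫ biprod.lift cm dm1) ≫ cokernel.π (biprod.lift cm dm1) = 0 ∧
    Mono (kernel.ι dm2 ≫ cm) ∧
    Epi (biprod.inl ≫ cokernel.π (biprod.lift cm dm1)) :=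
  stmt16_general cm dm1 dm2 cp dp1 dp2 w hS hm2 he2
end

section
/- The functors T and T⁻¹ between diads and triads are mutually inverse equivalences: for every diad D•, T⁻¹(T(D•)) is naturally isomorphic to D•, and for every triad S, T(T⁻¹(S)) is naturally isomorphic to S. -/
/-!
Two facts about an exact sequence `X → Y → Z` in an abelian category carry the whole proof: if
`X → Y` is mono it is the kernel of `Y → Z`, and if `Y → Z` is epi it is the cokernel of
`X → Y`. For a diad, `L : F_L → ker R` is mono with cokernel `h`, so `ker h ≅ F_L`, and `R` is
epi, so `coker (ker R ↪ A ⊕ B) ≅ F_R`. For a triad `S`, regroup the middle term as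
`(A ⊕ B¹) ⊕ B²`. Exactness of `S` together with surjectivity of `(c₊, d₊¹)` makes `d₋²` epi and
`ker d₋² → A ⊕ B¹ → F₊` exact; hence `ker R ≅ F₋`, `H ≅ F₋ / ker d₋² ≅ B²` and
`coker L ≅ F₊`. The sign in `−k` is the relation `c₋c₊ + d₋¹d₊¹ = −d₋²d₊²` expressed by `S`
being a complex.
-/

open CategoryTheory CategoryTheory.Limits

noncomputable section

variable {C : Type*} [Category C] [Abelian C] {FL A B FR : C}
  (aL : FL ⟶ A) (bL : FL ⟶ B) (aR : A ⟶ FR) (bR : B ⟶ FR)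

/-- The first map `L = (a_L, b_L) : F_L ⟶ A ⊞ B` of a diad. -/
abbrev diadL : FL ⟶ A ⊞ B := biprod.lift aL bL

/-- The second map `R = (a_R, b_R) : A ⊞ B ⟶ F_R` of a diad. -/
abbrev diadR : A ⊞ B ⟶ FR := biprod.desc aR bR

/-- The middle cohomology `H(D•) = ker R / im L` of a diad. -/
def diadH (w : diadL aL bL ≫ diadR aR bR = 0) : C :=
  cokernel (kernel.lift (diadR aR bR) (diadL aL bL) w)

/-- The projection `h : ker R ⟶ H(D•)`. -/
def diadh (w : diadL aL bL ≫ diadR aR bR = 0) :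
    kernel (diadR aR bR) ⟶ diadH aL bL aR bR w :=
  cokernel.π _

/-- The induced map `k : H(D•) ⟶ coker L`. -/
def diadk (w : diadL aL bL ≫ diadR aR bR = 0) :
    diadH aL bL aR bR w ⟶ cokernel (diadL aL bL) :=
  cokernel.desc _ (kernel.ι (diadR aR bR) ≫ cokernel.π (diadL aL bL))
    (by rw [← Category.assoc, kernel.lift_ι, cokernel.condition])

end

namespace CategoryTheory.ShortComplex.Exact

variable {C : Type*} [Category C] [Abelian C]

lemma exists_iso_kernel {S : ShortComplex C} (hS : S.Exact) [Mono S.f] :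
    ∃ e : S.X₁ ≅ kernel S.g, e.hom ≫ kernel.ι S.g = S.f :=
  ⟨hS.fIsKernel.conePointUniqueUpToIso (limit.isLimit _),
    hS.fIsKernel.conePointUniqueUpToIso_hom_comp _ WalkingParallelPair.zero⟩

lemma exists_iso_cokernel {S : ShortComplex C} (hS : S.Exact) [Epi S.g] :
    ∃ e : cokernel S.f ≅ S.X₃, cokernel.π S.f ≫ e.hom = S.g :=
  ⟨(colimit.isColimit _).coconePointUniqueUpToIso hS.gIsCokernel,
    (colimit.isColimit _).comp_coconePointUniqueUpToIso_hom _ WalkingParallelPair.one⟩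

lemma biprod_reassoc {X P Q R Z : C} {f₁ : X ⟶ P} {f₂ : X ⟶ Q} {f₃ : X ⟶ R}
    {g₁ : P ⟶ Z} {g₂ : Q ⟶ Z} {g₃ : R ⟶ Z}
    {w : biprod.lift f₁ (biprod.lift f₂ f₃) ≫ biprod.desc g₁ (biprod.desc g₂ g₃) = 0}
    {w' : biprod.lift (biprod.lift f₁ f₂) f₃ ≫ biprod.desc (biprod.desc g₁ g₂) g₃ = 0}
    (h : (ShortComplex.mk _ _ w).Exact) : (ShortComplex.mk _ _ w').Exact :=
  exact_of_iso (S₁ := ShortComplex.mk _ _ w)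
    (isoMk (Iso.refl _) (biprod.associator P Q R).symm (Iso.refl _)
      (by ext <;> simp [biprod.associator]) (by ext <;> simp [biprod.associator])) h

variable {X Y W Z : C} {m : X ⟶ Y} {d : X ⟶ W} {g₁ : Y ⟶ Z} {g₂ : W ⟶ Z}
  {w : biprod.lift m d ≫ biprod.desc g₁ g₂ = 0}

lemma epi_of_biprod (h : (ShortComplex.mk _ _ w).Exact) [Epi g₁] : Epi d := by
  have : Epi (biprod.desc g₁ g₂) := epi_of_epi_fac (biprod.inl_desc g₁ g₂)
  refine Preadditive.epi_of_cancel_zero _ fun {Q} u hu => ?_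
  -- `(0, u)` kills `lift m d`, so it factors through `desc g₁ g₂` as `ψ`; and `ψ` vanishes on the
  -- epi `g₁`
  let ψ := h.desc (biprod.snd ≫ u) (by simp [hu])
  have hψ : biprod.desc g₁ g₂ ≫ ψ = biprod.snd ≫ u := h.g_desc _ _
  have hψ0 : ψ = 0 := zero_of_epi_comp g₁ (by simpa using biprod.inl ≫= hψ)
  simpa [hψ0] using (biprod.inr ≫= hψ).symm

lemma exact_kernel_ι_comp_of_biprod (h : (ShortComplex.mk _ _ w).Exact)
    (w' : (kernel.ι d ≫ m) ≫ g₁ = 0) : (ShortComplex.mk _ _ w').Exact := by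
  rw [ShortComplex.exact_iff_exact_up_to_refinements]
  intro T x hx
  obtain ⟨T', π, hπ, y, hy⟩ := h.exact_up_to_refinements (x ≫ biprod.inl) (by simpa using hx)
  have hyd : y ≫ d = 0 := by simpa using hy.symm =≫ biprod.snd
  exact ⟨T', π, hπ, kernel.lift d y hyd, by simpa using hy =≫ biprod.fst⟩

end CategoryTheory.ShortComplex.Exact

section Diad

variable {C : Type*} [Category C] [Abelian C] {FL A B FR : C}
  {aL : FL ⟶ A} {bL : FL ⟶ B} {aR : A ⟶ FR} {bR : B ⟶ FR}

instance (w : diadL aL bL ≫ diadR aR bR = 0) : Epi (diadh aL bL aR bR w) :=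
  inferInstanceAs (Epi (cokernel.π _))

lemma diadh_diadk (w : diadL aL bL ≫ diadR aR bR = 0) :
    diadh aL bL aR bR w ≫ diadk aL bL aR bR w =
      kernel.ι (diadR aR bR) ≫ cokernel.π (diadL aL bL) :=
  cokernel.π_desc _ _ _

lemma exists_iso_diadH (w : diadL aL bL ≫ diadR aR bR = 0) {F B' : C}
    (e : F ≅ kernel (diadR aR bR)) {φ : FL ⟶ F} {d : F ⟶ B'} {hφd : φ ≫ d = 0}
    (hex : (ShortComplex.mk φ d hφd).Exact) [Epi d] (he : kernel.lift _ _ w = φ ≫ e.hom) :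
    ∃ e' : diadH aL bL aR bR w ≅ B', diadh aL bL aR bR w ≫ e'.hom = e.inv ≫ d := by
  have hex' : (ShortComplex.mk (kernel.lift _ _ w) (e.inv ≫ d) (by simp [he, hφd])).Exact :=
    ShortComplex.exact_of_iso (S₁ := ShortComplex.mk _ _ hφd)
      (ShortComplex.isoMk (Iso.refl _) e (Iso.refl _) (by simp [he]) (by simp)) hex
  have : Epi (e.inv ≫ d) := epi_comp _ _
  exact hex'.exists_iso_cokernel

lemma exists_iso_invT_T (w : diadL aL bL ≫ diadR aR bR = 0) [Mono aL] [Epi aR] :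
    ∃ (eL : FL ≅ kernel (diadh aL bL aR bR w))
      (eR : cokernel ((kernel.ι (diadR aR bR) : _ ⟶ A ⊞ B)) ≅ FR),
      eL.hom ≫ kernel.ι (diadh aL bL aR bR w) ≫ kernel.ι (diadR aR bR) = diadL aL bL ∧
      cokernel.π ((kernel.ι (diadR aR bR) : _ ⟶ A ⊞ B)) ≫ eR.hom = diadR aR bR := by
  have : Epi (diadR aR bR) := epi_of_epi_fac (biprod.inl_desc aR bR)
  have : Mono (kernel.lift _ _ w) :=
    have : Mono (diadL aL bL) := mono_of_mono_fac (biprod.lift_fst aL bL)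
    mono_of_mono_fac (kernel.lift_ι _ _ w)
  obtain ⟨eL, heL⟩ := (ShortComplex.exact_cokernel (kernel.lift _ _ w)).exists_iso_kernel
  obtain ⟨eR, heR⟩ := (ShortComplex.exact_kernel (diadR aR bR)).exists_iso_cokernel
  exact ⟨eL, eR, (reassoc_of% heL) _ |>.trans (kernel.lift_ι _ _ w), heR⟩

end Diad

section InvT

variable {C : Type*} [Category C] [Abelian C]

lemma diadL_kernel_ι_comp {F A B₁ B₂ : C} (c : F ⟶ A) (d₁ : F ⟶ B₁) (d₂ : F ⟶ B₂) :
    diadL (kernel.ι d₂ ≫ c) (kernel.ι d₂ ≫ d₁) = kernel.ι d₂ ≫ biprod.lift c d₁ := by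
  ext <;> simp

lemma diadR_inl_comp_inr_comp {A B Z : C} (f : A ⊞ B ⟶ Z) :
    diadR (biprod.inl ≫ f) (biprod.inr ≫ f) = f := by
  ext <;> simp

lemma exists_iso_kernel_diadR {X A B : C} (m : X ⟶ A ⊞ B) [Mono m] :
    ∃ e : X ≅ kernel (diadR (biprod.inl ≫ cokernel.π m) (biprod.inr ≫ cokernel.π m)),
      e.hom ≫ kernel.ι _ = m := by
  rw [diadR_inl_comp_inr_comp]
  exact (ShortComplex.exact_cokernel m).exists_iso_kernel

end InvT

namespace Triad

variable {C : Type*} [Category C] [Abelian C] {Fm A B1 B2 Fp : C}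
  {cm : Fm ⟶ A} {dm1 : Fm ⟶ B1} {dm2 : Fm ⟶ B2} {cp : A ⟶ Fp} {dp1 : B1 ⟶ Fp} {dp2 : B2 ⟶ Fp}

lemma lift_comp_desc
    (w : biprod.lift cm (biprod.lift dm1 dm2) ≫ biprod.desc cp (biprod.desc dp1 dp2) = 0) :
    biprod.lift cm dm1 ≫ biprod.desc cp dp1 = -(dm2 ≫ dp2) := by
  simp only [biprod.lift_desc] at w ⊢
  exact eq_neg_of_add_eq_zero_left ((add_assoc _ _ _).trans w)

variable {w : biprod.lift cm (biprod.lift dm1 dm2) ≫ biprod.desc cp (biprod.desc dp1 dp2) = 0}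

lemma exact_reassoc (hS : (ShortComplex.mk _ _ w).Exact) :
    (ShortComplex.mk (biprod.lift (biprod.lift cm dm1) dm2) (biprod.desc (biprod.desc cp dp1) dp2)
      (by simpa only [biprod.lift_desc, add_assoc] using w)).Exact :=
  hS.biprod_reassoc

lemma epi_dm2 (hS : (ShortComplex.mk _ _ w).Exact) [Epi (biprod.desc cp dp1)] : Epi dm2 :=
  (exact_reassoc hS).epi_of_biprod

lemma exists_iso_cokernel_diadL (hS : (ShortComplex.mk _ _ w).Exact)
    [Epi (biprod.desc cp dp1)] :
    ∃ e : cokernel (diadL (kernel.ι dm2 ≫ cm) (kernel.ι dm2 ≫ dm1)) ≅ Fp,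
      cokernel.π _ ≫ e.hom = biprod.desc cp dp1 := by
  rw [diadL_kernel_ι_comp]
  refine ((exact_reassoc hS).exact_kernel_ι_comp_of_biprod ?_).exists_iso_cokernel
  rw [Category.assoc, lift_comp_desc w, Preadditive.comp_neg, kernel.condition_assoc, zero_comp,
    neg_zero]

end Triad

open CategoryTheory CategoryTheory.Limits in
/-- `T` and `T⁻¹` are mutually inverse equivalences between diads and triads:
(1) for every diad `D•`, the diad `T⁻¹(T(D•))` is isomorphic to `D•` (by isomorphisms on
the outer terms compatible with the structure maps, the identity on `A` and `B`);
(2) for every triad `S`, the triad `T(T⁻¹(S))` is isomorphic to `S` (by isomorphisms on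
`F₋`, `B²` and `F₊` compatible with all the structure maps). -/
theorem stmt17 {C : Type*} [Category C] [Abelian C] :
    (∀ (FL A B FR : C) (aL : FL ⟶ A) (bL : FL ⟶ B) (aR : A ⟶ FR) (bR : B ⟶ FR)
      (w : diadL aL bL ≫ diadR aR bR = 0), Mono aL → Epi aR →
      ∃ (eL : FL ≅ kernel (diadh aL bL aR bR w))
        (eR : cokernel ((kernel.ι (diadR aR bR) : _ ⟶ A ⊞ B)) ≅ FR),
        eL.hom ≫ kernel.ι (diadh aL bL aR bR w) ≫ kernel.ι (diadR aR bR) =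
          diadL aL bL ∧
        cokernel.π ((kernel.ι (diadR aR bR) : _ ⟶ A ⊞ B)) ≫ eR.hom = diadR aR bR) ∧
    (∀ (Fm A B1 B2 Fp : C) (cm : Fm ⟶ A) (dm1 : Fm ⟶ B1) (dm2 : Fm ⟶ B2)
      (cp : A ⟶ Fp) (dp1 : B1 ⟶ Fp) (dp2 : B2 ⟶ Fp)
      (w : biprod.lift cm (biprod.lift dm1 dm2) ≫ biprod.desc cp (biprod.desc dp1 dp2) = 0),
      (ShortComplex.mk _ _ w).ShortExact →
      Mono (biprod.lift cm dm1) → Mono (biprod.lift cm dm2) →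
      Epi (biprod.desc cp dp1) → Epi (biprod.desc cp dp2) →
      ∃ (w' : diadL (kernel.ι dm2 ≫ cm) (kernel.ι dm2 ≫ dm1) ≫
                diadR (biprod.inl ≫ cokernel.π (biprod.lift cm dm1))
                      (biprod.inr ≫ cokernel.π (biprod.lift cm dm1)) = 0)
        (em : Fm ≅ kernel (diadR (biprod.inl ≫ cokernel.π (biprod.lift cm dm1))
                      (biprod.inr ≫ cokernel.π (biprod.lift cm dm1))))
        (e2 : diadH (kernel.ι dm2 ≫ cm) (kernel.ι dm2 ≫ dm1)
                (biprod.inl ≫ cokernel.π (biprod.lift cm dm1))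
                (biprod.inr ≫ cokernel.π (biprod.lift cm dm1)) w' ≅ B2)
        (ep : cokernel (diadL (kernel.ι dm2 ≫ cm) (kernel.ι dm2 ≫ dm1)) ≅ Fp),
        em.hom ≫ kernel.ι _ = biprod.lift cm dm1 ∧
        dm2 = em.hom ≫ diadh (kernel.ι dm2 ≫ cm) (kernel.ι dm2 ≫ dm1)
                (biprod.inl ≫ cokernel.π (biprod.lift cm dm1))
                (biprod.inr ≫ cokernel.π (biprod.lift cm dm1)) w' ≫ e2.hom ∧
        cokernel.π (diadL (kernel.ι dm2 ≫ cm) (kernel.ι dm2 ≫ dm1)) ≫ ep.hom =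
          biprod.desc cp dp1 ∧
        (-(diadk (kernel.ι dm2 ≫ cm) (kernel.ι dm2 ≫ dm1)
                (biprod.inl ≫ cokernel.π (biprod.lift cm dm1))
                (biprod.inr ≫ cokernel.π (biprod.lift cm dm1)) w')) ≫ ep.hom =
          e2.hom ≫ dp2) := by
  refine ⟨fun FL A B FR aL bL aR bR w _ _ => exists_iso_invT_T w, ?_⟩
  intro Fm A B1 B2 Fp cm dm1 dm2 cp dp1 dp2 w hS _ _ _ _
  have w' : diadL (kernel.ι dm2 ≫ cm) (kernel.ι dm2 ≫ dm1) ≫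
      diadR (biprod.inl ≫ cokernel.π (biprod.lift cm dm1))
        (biprod.inr ≫ cokernel.π (biprod.lift cm dm1)) = 0 := by
    simp [diadL_kernel_ι_comp, diadR_inl_comp_inr_comp]
  have : Epi dm2 := Triad.epi_dm2 hS.exact
  obtain ⟨em, hem⟩ := exists_iso_kernel_diadR (biprod.lift cm dm1)
  obtain ⟨e2, he2⟩ := exists_iso_diadH w' em (ShortComplex.exact_kernel dm2) (by
    rw [← cancel_mono (kernel.ι _), kernel.lift_ι, Category.assoc, hem, diadL_kernel_ι_comp])
  obtain ⟨ep, hep⟩ := Triad.exists_iso_cokernel_diadL hS.exact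
  refine ⟨w', em, e2, ep, hem, by rw [he2, em.hom_inv_id_assoc], hep, ?_⟩
  rw [← cancel_epi (diadh _ _ _ _ w'), Preadditive.neg_comp, Preadditive.comp_neg,
    reassoc_of% diadh_diadk, hep, reassoc_of% he2, ← cancel_epi em.hom, Preadditive.comp_neg,
    reassoc_of% hem, Triad.lift_comp_desc w, neg_neg, em.hom_inv_id_assoc]
end

section
/- Let T : C → D be a triangulated functor between triangulated categories with t-structures, with C = ⋃_b C^{≤b} (all objects bounded above). If T is right t-exact (T(C^{≤0}) ⊆ D^{≤0}) and T sends the heart of C into the heart of D, then T is t-exact: it also sends C^{≥0} into D^{≥0}, and commutes with all truncation functors up to isomorphism. -/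
open CategoryTheory CategoryTheory.Limits CategoryTheory.Pretriangulated
open CategoryTheory.Triangulated

/-!
Right t-exactness passes from degree `0` to every degree by shifting, and so does the heart
condition. For `X ∈ C^{≥n} ∩ C^{≤n+b}`, induct on the amplitude `b`: the truncation triangle
`τ^{≤n+b-1} X → X → τ^{≥n+b} X →` has its first term of smaller amplitude and its third term
in the shifted heart, so `T` sends both into `D^{≥n}`, which is closed under extensions.
Since every object of `C` is bounded above, `T` is left t-exact.
-/

namespace CategoryTheory.Triangulated.TStructure

section

variable {C : Type*} [Category C] [Preadditive C] [HasZeroObject C] [HasShift C ℤ]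
  [∀ n : ℤ, (shiftFunctor C n).Additive] [Pretriangulated C] (t : TStructure C)

lemma isGE₁ (T : Triangle C) (hT : T ∈ distTriang C) (n : ℤ) (h₂ : t.IsGE T.obj₂ n)
    (h₃ : t.IsGE T.obj₃ (n - 1)) : t.IsGE T.obj₁ n :=
  t.isGE₂ _ (inv_rot_of_distTriang _ hT) n (t.isGE_shift T.obj₃ (n - 1) (-1) n) h₂

lemma isLE₃ (T : Triangle C) (hT : T ∈ distTriang C) (n : ℤ) (h₁ : t.IsLE T.obj₁ (n + 1))
    (h₂ : t.IsLE T.obj₂ n) : t.IsLE T.obj₃ n :=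
  t.isLE₂ _ (rot_of_distTriang _ hT) n h₂ (t.isLE_shift T.obj₁ (n + 1) 1 n)

end

section

variable {C D : Type*} [Category C] [Category D] [HasShift C ℤ] [Preadditive D]
  [HasZeroObject D] [HasShift D ℤ] [∀ n : ℤ, (shiftFunctor D n).Additive] [Pretriangulated D]
  (tD : TStructure D) (F : C ⥤ D) [F.CommShift ℤ]

lemma isLE_map_of_isLE_map_shift (X : C) (n : ℤ) (h : tD.IsLE (F.obj (X⟦n⟧)) 0) :
    tD.IsLE (F.obj X) n := by
  have : tD.IsLE ((shiftFunctor C n ⋙ F).obj X) 0 := h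
  have : tD.IsLE ((F.obj X)⟦n⟧) 0 := tD.isLE_of_iso ((F.commShiftIso n).app X) 0
  exact tD.isLE_of_shift (F.obj X) n n 0

lemma isGE_map_of_isGE_map_shift (X : C) (n : ℤ) (h : tD.IsGE (F.obj (X⟦n⟧)) 0) :
    tD.IsGE (F.obj X) n := by
  have : tD.IsGE ((shiftFunctor C n ⋙ F).obj X) 0 := h
  have : tD.IsGE ((F.obj X)⟦n⟧) 0 := tD.isGE_of_iso ((F.commShiftIso n).app X) 0
  exact tD.isGE_of_shift (F.obj X) n n 0

end

section

variable {C D : Type*} [Category C] [Category D] [Preadditive C] [Preadditive D]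
  [HasZeroObject C] [HasZeroObject D] [HasShift C ℤ] [HasShift D ℤ]
  [∀ n : ℤ, (shiftFunctor C n).Additive] [∀ n : ℤ, (shiftFunctor D n).Additive]
  [Pretriangulated C] [Pretriangulated D]
  (tC : TStructure C) (tD : TStructure D) (F : C ⥤ D) [F.CommShift ℤ]

lemma isLE_map_of_isLE_zero (hF : ∀ X : C, tC.IsLE X 0 → tD.IsLE (F.obj X) 0)
    (X : C) (n : ℤ) (hX : tC.IsLE X n) : tD.IsLE (F.obj X) n :=
  isLE_map_of_isLE_map_shift tD F X n (hF _ (tC.isLE_shift X n n 0))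

lemma isGE_map_of_isGE_zero (hF : ∀ X : C, tC.IsGE X 0 → tD.IsGE (F.obj X) 0)
    (X : C) (n : ℤ) (hX : tC.IsGE X n) : tD.IsGE (F.obj X) n :=
  isGE_map_of_isGE_map_shift tD F X n (hF _ (tC.isGE_shift X n n 0))

lemma isGE_map_of_heart (hF : ∀ X : C, tC.IsLE X 0 → tC.IsGE X 0 → tD.IsGE (F.obj X) 0)
    (X : C) (n : ℤ) (hX₁ : tC.IsLE X n) (hX₂ : tC.IsGE X n) : tD.IsGE (F.obj X) n :=
  isGE_map_of_isGE_map_shift tD F X n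
    (hF _ (tC.isLE_shift X n n 0) (tC.isGE_shift X n n 0))

lemma isGE_map_of_isGE_of_isLE [F.IsTriangulated]
    (hF : ∀ X : C, tC.IsLE X 0 → tC.IsGE X 0 → tD.IsGE (F.obj X) 0) (b : ℕ) :
    ∀ (X : C) (n : ℤ), tC.IsGE X n → tC.IsLE X (n + b) → tD.IsGE (F.obj X) n := by
  induction b with
  | zero =>
    intro X n hX₁ hX₂
    exact isGE_map_of_heart tC tD F hF X n (by simpa using hX₂) hX₁
  | succ b ih =>
    intro X n hX₁ hX₂
    have hT : Triangle.mk ((tC.truncLEι (n + b)).app X) ((tC.truncGTπ (n + b)).app X)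
        ((tC.truncGTδLE (n + b)).app X) ∈ distTriang C :=
      tC.triangleLEGT_distinguished (n + b) X
    have hB₁ : tC.IsGE ((tC.truncGT (n + b)).obj X) (n + b + 1) :=
      tC.isGE_truncGT_obj X (n + b) _
    have hB₂ : tC.IsLE ((tC.truncGT (n + b)).obj X) (n + b + 1) :=
      tC.isLE₃ _ hT _ (tC.isLE_truncLE_obj X (n + b) _)
        (tC.isLE_of_le X (n + (b + 1 : ℕ)) _ (by push_cast; omega))
    have hA : tC.IsGE ((tC.truncLE (n + b)).obj X) n :=
      tC.isGE₁ _ hT n hX₁ (tC.isGE_of_ge ((tC.truncGT (n + b)).obj X) _ (n + b + 1) (by omega))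
    have hFA : tD.IsGE (F.obj ((tC.truncLE (n + b)).obj X)) n :=
      ih _ n hA (tC.isLE_truncLE_obj X (n + b) _)
    have hFB : tD.IsGE (F.obj ((tC.truncGT (n + b)).obj X)) n :=
      have := isGE_map_of_heart tC tD F hF _ _ hB₂ hB₁
      tD.isGE_of_ge _ n (n + b + 1) (by omega)
    exact tD.isGE₂ _ (F.map_distinguished _ hT) n hFA hFB

end

end CategoryTheory.Triangulated.TStructure

/-- Let `T : C ⥤ D` be a triangulated functor between triangulated categories with
t-structures, where every object of `C` is bounded above. If `T` is right t-exact and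
sends the heart of `C` into the heart of `D`, then `T` is t-exact: it sends `C^{≥0}` into
`D^{≥0}`, and it commutes with truncations, in the sense that it sends any truncation
triangle `τ^{≤n} X → X → τ^{>n} X →` of any `X : C` to a truncation triangle of `T X`. -/
theorem stmt19 {C D : Type*} [Category C] [Category D]
    [Preadditive C] [Preadditive D]
    [HasZeroObject C] [HasZeroObject D]
    [HasShift C ℤ] [HasShift D ℤ]
    [∀ n : ℤ, (shiftFunctor C n).Additive] [∀ n : ℤ, (shiftFunctor D n).Additive]
    [Pretriangulated C] [Pretriangulated D]
    (tC : TStructure C) (tD : TStructure D)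
    (T : C ⥤ D) [T.CommShift ℤ] [T.IsTriangulated]
    (hbdd : ∀ X : C, ∃ b : ℤ, tC.le b X)
    (hright : ∀ X : C, tC.le 0 X → tD.le 0 (T.obj X))
    (hheart : ∀ X : C, tC.le 0 X → tC.ge 0 X →
      tD.le 0 (T.obj X) ∧ tD.ge 0 (T.obj X)) :
    (∀ X : C, tC.ge 0 X → tD.ge 0 (T.obj X)) ∧
    (∀ (n : ℤ) (X A B : C) (f : A ⟶ X) (g : X ⟶ B) (h : B ⟶ A⟦(1 : ℤ)⟧),
      Triangle.mk f g h ∈ (distTriang C) →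
      tC.le n A → tC.ge (n + 1) B →
      tD.le n (T.obj A) ∧ tD.ge (n + 1) (T.obj B)) := by
  simp only [TStructure.le_iff_isLE, TStructure.ge_iff_isGE] at hbdd hright hheart ⊢
  have hge : ∀ (X : C) (n : ℤ), tC.IsGE X n → tD.IsGE (T.obj X) n := by
    refine TStructure.isGE_map_of_isGE_zero tC tD T fun X hX ↦ ?_
    obtain ⟨b, hb⟩ := hbdd X
    exact TStructure.isGE_map_of_isGE_of_isLE tC tD T (fun Y h₁ h₂ ↦ (hheart Y h₁ h₂).2)
      b.toNat X 0 hX (tC.isLE_of_le X b _ (by omega))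
  exact ⟨fun X ↦ hge X 0, fun n X A B _ _ _ _ hA hB ↦
    ⟨TStructure.isLE_map_of_isLE_zero tC tD T hright A n hA, hge B (n + 1) hB⟩⟩
end
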